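/- Let N ∈ ℕ^d, let ξ^1,…,ξ^m ∈ 𝕋^d be knots and w_1,…,w_m ≥ 0 be weights such that Σ_{ν=1}^m w_ν f(ξ^ν) = (2π)^{-d} ∫_{𝕋^d} f(x) dx for every trigonometric polynomial f ∈ 𝒯(3N). Then sup_{x ∈ 𝕋^d} Σ_{ν=1}^m w_ν |𝒱_N(x - ξ^ν)| ≤ 3^d. -/

import Mathlib

open MeasureTheory

/-- The cube `[0,2π]^d` representing the torus `𝕋^d`. -/
def torusCube (d : ℕ) : Set (Fin d → ℝ) :=
  Set.univ.pi fun _ => Set.Icc (0 : ℝ) (2 * Real.pi)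

/-- `f ∈ 𝒯(N)`: a trigonometric polynomial with frequencies `k ∈ ℤ^d`, `|k_j| ≤ N_j`. -/
def IsTrigPoly {d : ℕ} (N : Fin d → ℕ) (f : (Fin d → ℝ) → ℂ) : Prop :=
  ∃ c : (Fin d → ℤ) → ℂ,
    f = fun x => ∑ k ∈ Finset.Icc (fun j => -(N j : ℤ)) (fun j => (N j : ℤ)),
      c k * Complex.exp (Complex.I * ((∑ j, (k j : ℝ) * x j : ℝ) : ℂ))

/-- The univariate Fejér kernel `𝒦_n(x) = Σ_{|k| ≤ n} (1 - |k|/n) e^{ikx}`. -/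
noncomputable def fejerKernel (n : ℕ) (x : ℝ) : ℂ :=
  ∑ k ∈ Finset.Icc (-(n : ℤ)) (n : ℤ),
    ((1 - ((|k| : ℤ) : ℝ) / (n : ℝ) : ℝ) : ℂ) * Complex.exp (Complex.I * ((k : ℝ) * x : ℝ))

/-- The univariate de la Vallée Poussin kernel `𝒱_n = 2𝒦_{2n} - 𝒦_n`. -/
noncomputable def dlvpKernel (n : ℕ) (x : ℝ) : ℂ :=
  2 * fejerKernel (2 * n) x - fejerKernel n x

/-!
The Fejér kernel is a normalized squared modulus, `𝒦_n = |∑_{l<n} e^{ilx}|² / n ≥ 0` (and `𝒦_0 = 1`).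
Hence `|𝒱_n| = |2𝒦_{2n} - 𝒦_n| ≤ 2𝒦_{2n} + 𝒦_n`, a nonnegative trigonometric polynomial of degree
`2n` whose mean is `3`. For fixed `x`, the product over `j` of these majorants at `x_j - y_j` lies in
`𝒯(3N)`, so the quadrature rule integrates it exactly, and the weighted sum of the majorants at the
knots equals `(2π)^{-d} (3 · 2π)^d = 3^d`.
-/

open Finset ComplexConjugate
open scoped ComplexOrder

noncomputable def fourierExp (k : ℤ) (t : ℝ) : ℂ := Complex.exp (Complex.I * ((k * t : ℝ) : ℂ))

lemma fourierExp_zero_left (t : ℝ) : fourierExp 0 t = 1 := by simp [fourierExp]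

lemma fourierExp_add_left (k l : ℤ) (t : ℝ) :
    fourierExp (k + l) t = fourierExp k t * fourierExp l t := by
  simp only [fourierExp, ← Complex.exp_add]
  push_cast
  ring_nf

lemma fourierExp_sub_right (k : ℤ) (x t : ℝ) :
    fourierExp k (x - t) = fourierExp k x * fourierExp (-k) t := by
  simp only [fourierExp, ← Complex.exp_add]
  push_cast
  ring_nf

lemma conj_fourierExp (k : ℤ) (t : ℝ) : conj (fourierExp k t) = fourierExp (-k) t := by
  simp only [fourierExp, ← Complex.exp_conj, map_mul, Complex.conj_I, Complex.conj_ofReal]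
  push_cast
  ring_nf

lemma continuous_fourierExp (k : ℤ) : Continuous (fourierExp k) := by
  unfold fourierExp
  fun_prop

lemma integral_fourierExp (k : ℤ) :
    ∫ t in Set.Icc 0 (2 * Real.pi), fourierExp k t
      = if k = 0 then ((2 * Real.pi : ℝ) : ℂ) else 0 := by
  have hpi : 0 ≤ 2 * Real.pi := by positivity
  split_ifs with hk
  · simp [hk, fourierExp_zero_left, hpi]
  have hik : Complex.I * k ≠ 0 := mul_ne_zero Complex.I_ne_zero (by exact_mod_cast hk)
  have hexp : fourierExp k = fun t : ℝ => Complex.exp (Complex.I * k * t) := by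
    funext t
    simp only [fourierExp]
    push_cast
    ring_nf
  rw [integral_Icc_eq_integral_Ioc, ← intervalIntegral.integral_of_le hpi, hexp,
    integral_exp_mul_complex hik]
  have hperiod : Complex.I * k * (2 * Real.pi) = k * (2 * Real.pi * Complex.I) := by ring
  simp [hperiod, Complex.exp_int_mul_two_pi_mul_I]

lemma prod_fourierExp {d : ℕ} (k : Fin d → ℤ) (y : Fin d → ℝ) :
    ∏ j, fourierExp (k j) (y j) = Complex.exp (Complex.I * ((∑ j, (k j : ℝ) * y j : ℝ) : ℂ)) := by
  simp only [fourierExp, ← Complex.exp_sum, ← mul_sum]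
  push_cast
  rfl

lemma integral_sum_mul_fourierExp (M : ℕ) (c : ℤ → ℂ) :
    ∫ t in Set.Icc 0 (2 * Real.pi), ∑ k ∈ Icc (-(M : ℤ)) M, c k * fourierExp k t
      = 2 * Real.pi * c 0 := by
  rw [integral_finsetSum _ fun k _ => ((continuous_fourierExp k).integrableOn_Icc).const_mul _]
  simp_rw [integral_const_mul, integral_fourierExp, mul_ite, mul_zero]
  rw [sum_ite_eq' _ 0, if_pos (by simp)]
  push_cast
  ring

lemma isTrigPoly_prod_sum {d : ℕ} (M : Fin d → ℕ) (c : Fin d → ℤ → ℂ) :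
    IsTrigPoly M fun y => ∏ j, ∑ k ∈ Icc (-(M j : ℤ)) (M j), c j k * fourierExp k (y j) := by
  refine ⟨fun k => ∏ j, c j (k j), funext fun y => ?_⟩
  rw [prod_univ_sum, ← Pi.Icc_eq]
  refine sum_congr rfl fun k _ => ?_
  rw [prod_mul_distrib, prod_fourierExp]

lemma integral_torusCube_prod {d : ℕ} (g : Fin d → ℝ → ℂ) :
    ∫ y in torusCube d, ∏ j, g j (y j) = ∏ j, ∫ t in Set.Icc 0 (2 * Real.pi), g j t := by
  rw [torusCube, volume_pi, Measure.restrict_pi_pi, integral_fintype_prod_eq_prod]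

noncomputable def dirichletSum (n : ℕ) (t : ℝ) : ℂ := ∑ l ∈ range n, fourierExp l t

lemma card_filter_range_add_mem (n : ℕ) {k : ℤ} (hk : |k| ≤ n) :
    (#((range n).filter fun m : ℕ => 0 ≤ (m : ℤ) + k ∧ (m : ℤ) + k < n) : ℤ) = n - |k| := by
  have hIco : (range n).filter (fun m : ℕ => 0 ≤ (m : ℤ) + k ∧ (m : ℤ) + k < n)
      = Ico (-k).toNat ((n - k).toNat ⊓ n) := by
    ext m
    simp only [mem_filter, mem_range, mem_Ico, lt_inf_iff]
    omega
  rw [hIco, Nat.card_Ico]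
  rcases abs_cases k with ⟨h, _⟩ | ⟨h, _⟩ <;> omega

lemma filter_Icc_add_mem {n m : ℕ} (hm : m < n) :
    {k ∈ Icc (-(n : ℤ)) n | 0 ≤ (m : ℤ) + k ∧ (m : ℤ) + k < n}
      = (range n).image fun l : ℕ => (l : ℤ) - m := by
  ext k
  simp only [mem_filter, mem_Icc, mem_image, mem_range]
  constructor
  · rintro ⟨-, h₀, h₁⟩
    exact ⟨((m : ℤ) + k).toNat, by omega, by omega⟩
  · rintro ⟨l, hl, rfl⟩
    omega

-- `|D_n|² = ∑_{l, m < n} e_{l - m}`, and `k` arises from the `n - |k|` pairs with `l - m = k`.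
lemma sum_sub_abs_mul_fourierExp (n : ℕ) (t : ℝ) :
    ∑ k ∈ Icc (-(n : ℤ)) n, ((n - |k| : ℤ) : ℂ) * fourierExp k t
      = Complex.normSq (dirichletSum n t) := by
  have hcount : ∀ k ∈ Icc (-(n : ℤ)) n, ((n - |k| : ℤ) : ℂ) * fourierExp k t
      = ∑ m ∈ range n, if 0 ≤ (m : ℤ) + k ∧ (m : ℤ) + k < n then fourierExp k t else 0 := by
    intro k hk
    rw [sum_ite, sum_const, sum_const_zero, add_zero, nsmul_eq_mul,
      ← card_filter_range_add_mem n (abs_le.mpr (mem_Icc.mp hk))]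
    norm_cast
  have hshift : ∀ m ∈ range n,
      (∑ k ∈ Icc (-(n : ℤ)) n, if 0 ≤ (m : ℤ) + k ∧ (m : ℤ) + k < n then fourierExp k t else 0)
        = ∑ l ∈ range n, fourierExp ((l : ℤ) - m) t := by
    intro m hm
    rw [← sum_filter, filter_Icc_add_mem (mem_range.mp hm), sum_image]
    intro a _ b _ h
    simpa using h
  rw [sum_congr rfl hcount, sum_comm, sum_congr rfl hshift, sum_comm, ← Complex.mul_conj,
    dirichletSum, map_sum, sum_mul_sum]
  simp_rw [conj_fourierExp, ← fourierExp_add_left, sub_eq_add_neg]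

lemma fejerKernel_eq_normSq_div {n : ℕ} (hn : n ≠ 0) (t : ℝ) :
    fejerKernel n t = ((Complex.normSq (dirichletSum n t) / n : ℝ) : ℂ) := by
  rw [Complex.ofReal_div, ← sum_sub_abs_mul_fourierExp, eq_div_iff (by exact_mod_cast hn),
    fejerKernel, sum_mul]
  refine sum_congr rfl fun k _ => ?_
  rw [mul_right_comm]
  congr 1
  push_cast
  field_simp
  norm_cast

lemma fejerKernel_zero_left (t : ℝ) : fejerKernel 0 t = 1 := by simp [fejerKernel]

lemma fejerKernel_nonneg (n : ℕ) (t : ℝ) : 0 ≤ fejerKernel n t := by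
  rcases eq_or_ne n 0 with rfl | hn
  · simp [fejerKernel_zero_left]
  · rw [fejerKernel_eq_normSq_div hn, Complex.zero_le_real]
    exact div_nonneg (Complex.normSq_nonneg _) n.cast_nonneg

noncomputable def fejerCoeff (n : ℕ) (k : ℤ) : ℝ := if |k| ≤ n then 1 - ((|k| : ℤ) : ℝ) / n else 0

lemma fejerKernel_eq_sum_Icc {n M : ℕ} (h : n ≤ M) (t : ℝ) :
    fejerKernel n t = ∑ k ∈ Icc (-(M : ℤ)) M, (fejerCoeff n k : ℂ) * fourierExp k t := by
  have hsub : Icc (-(n : ℤ)) n ⊆ Icc (-(M : ℤ)) M := Icc_subset_Icc (by omega) (by omega)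
  rw [← sum_subset hsub fun k _ hk => ?_, fejerKernel]
  · refine sum_congr rfl fun k hk => ?_
    rw [fejerCoeff, if_pos (abs_le.mpr (mem_Icc.mp hk))]
    rfl
  · rw [fejerCoeff, if_neg fun h => hk (mem_Icc.mpr (abs_le.mp h)), Complex.ofReal_zero, zero_mul]

lemma sum_Icc_neg_index {M : Type*} [AddCommMonoid M] (n : ℤ) (f : ℤ → M) :
    ∑ k ∈ Icc (-n) n, f (-k) = ∑ k ∈ Icc (-n) n, f k :=
  sum_nbij' Neg.neg Neg.neg (fun k hk => by simp only [mem_Icc] at hk ⊢; omega)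
    (fun k hk => by simp only [mem_Icc] at hk ⊢; omega) (fun k _ => neg_neg k)
    (fun k _ => neg_neg k) fun k _ => rfl

noncomputable def dlvpMajorant (n : ℕ) (t : ℝ) : ℂ := 2 * fejerKernel (2 * n) t + fejerKernel n t

lemma dlvpMajorant_nonneg (n : ℕ) (t : ℝ) : 0 ≤ dlvpMajorant n t :=
  add_nonneg (mul_nonneg zero_le_two (fejerKernel_nonneg _ t)) (fejerKernel_nonneg n t)

lemma norm_dlvpKernel_le_norm_dlvpMajorant (n : ℕ) (t : ℝ) :
    ‖dlvpKernel n t‖ ≤ ‖dlvpMajorant n t‖ := by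
  obtain ⟨a, ha, hae⟩ : ∃ a : ℝ, 0 ≤ a ∧ (a : ℂ) = fejerKernel (2 * n) t :=
    RCLike.nonneg_iff_exists_ofReal.mp (fejerKernel_nonneg (2 * n) t)
  obtain ⟨b, hb, hbe⟩ : ∃ b : ℝ, 0 ≤ b ∧ (b : ℂ) = fejerKernel n t :=
    RCLike.nonneg_iff_exists_ofReal.mp (fejerKernel_nonneg n t)
  rw [dlvpKernel, dlvpMajorant, ← hae, ← hbe]
  have hsub : 2 * (a : ℂ) - b = ((2 * a - b : ℝ) : ℂ) := by push_cast; rfl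
  have hadd : 2 * (a : ℂ) + b = ((2 * a + b : ℝ) : ℂ) := by push_cast; rfl
  rw [hsub, hadd, Complex.norm_real, Complex.norm_real, Real.norm_eq_abs,
    Real.norm_of_nonneg (by positivity)]
  exact abs_le.mpr ⟨by linarith, by linarith⟩

lemma exists_dlvpMajorant_sub_eq_sum (n : ℕ) (x : ℝ) :
    ∃ c : ℤ → ℂ, c 0 = 3 ∧ ∀ t, dlvpMajorant n (x - t)
      = ∑ k ∈ Icc (-((3 * n : ℕ) : ℤ)) (3 * n : ℕ), c k * fourierExp k t := by
  refine ⟨fun k => (2 * fejerCoeff (2 * n) (-k) + fejerCoeff n (-k) : ℝ) * fourierExp (-k) x,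
    by norm_num [fejerCoeff, fourierExp_zero_left], fun t => ?_⟩
  rw [dlvpMajorant, fejerKernel_eq_sum_Icc (M := 3 * n) (by omega),
    fejerKernel_eq_sum_Icc (M := 3 * n) (by omega), mul_sum, ← sum_add_distrib,
    ← sum_Icc_neg_index]
  refine sum_congr rfl fun k _ => ?_
  rw [fourierExp_sub_right, neg_neg]
  push_cast
  ring

lemma norm_prod_dlvpKernel_le {ι : Type*} [Fintype ι] (n : ι → ℕ) (t : ι → ℝ) :
    ‖∏ i, dlvpKernel (n i) (t i)‖ ≤ (∏ i, dlvpMajorant (n i) (t i)).re := by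
  rw [Complex.re_eq_norm.mpr (prod_nonneg fun i _ => dlvpMajorant_nonneg (n i) (t i)), norm_prod,
    norm_prod]
  exact prod_le_prod (fun i _ => norm_nonneg _)
    fun i _ => norm_dlvpKernel_le_norm_dlvpMajorant (n i) (t i)

theorem dlvp_weighted_sum_bound_general (d : ℕ) (N : Fin d → ℕ)
    (m : ℕ) (ξ : Fin m → (Fin d → ℝ)) (w : Fin m → ℝ) (hw : ∀ ν, 0 ≤ w ν)
    (hquad : ∀ f : (Fin d → ℝ) → ℂ, IsTrigPoly (fun j => 3 * N j) f →
      ∑ ν, (w ν : ℂ) * f (ξ ν) =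
        (((2 * Real.pi) ^ d : ℝ) : ℂ)⁻¹ * ∫ x in torusCube d, f x) :
    ∀ x : Fin d → ℝ,
      ∑ ν, w ν * ‖∏ j, dlvpKernel (N j) (x j - ξ ν j)‖ ≤ 3 ^ d := by
  intro x
  choose c hc₀ hc using fun j => exists_dlvpMajorant_sub_eq_sum (N j) (x j)
  set F : (Fin d → ℝ) → ℂ := fun y => ∏ j, dlvpMajorant (N j) (x j - y j)
  set G : Fin d → ℝ → ℂ := fun j t => ∑ k ∈ Icc (-((3 * N j : ℕ) : ℤ)) (3 * N j : ℕ),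
    c j k * fourierExp k t
  have hF : F = fun y => ∏ j, G j (y j) := funext fun y => prod_congr rfl fun j _ => hc j (y j)
  have hintegral : ∫ y in torusCube d, F y = (((2 * Real.pi) ^ d : ℝ) : ℂ) * 3 ^ d := by
    rw [hF, integral_torusCube_prod]
    simp only [G, integral_sum_mul_fourierExp, hc₀, prod_const, card_univ, Fintype.card_fin]
    push_cast
    rw [← mul_pow]
  have hsum : ∑ ν, (w ν : ℂ) * F (ξ ν) = 3 ^ d := by
    rw [hquad F (hF ▸ isTrigPoly_prod_sum _ c), hintegral, inv_mul_cancel_left₀ (by positivity)]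
  calc ∑ ν, w ν * ‖∏ j, dlvpKernel (N j) (x j - ξ ν j)‖
      ≤ ∑ ν, w ν * (F (ξ ν)).re :=
        sum_le_sum fun ν _ => mul_le_mul_of_nonneg_left (norm_prod_dlvpKernel_le _ _) (hw ν)
    _ = (∑ ν, (w ν : ℂ) * F (ξ ν)).re := by simp [Complex.re_sum]
    _ = 3 ^ d := by rw [hsum]; norm_cast

/-- If the knots `ξ^ν ∈ 𝕋^d` and nonnegative weights `w_ν` integrate exactly every
trigonometric polynomial `f ∈ 𝒯(3N)`, then
`sup_{x ∈ 𝕋^d} Σ_ν w_ν |𝒱_N(x - ξ^ν)| ≤ 3^d`, where `𝒱_N(x) = ∏_j 𝒱_{N_j}(x_j)`. -/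
theorem dlvp_weighted_sum_bound (d : ℕ) (hd : 1 ≤ d) (N : Fin d → ℕ) (hN : ∀ j, 1 ≤ N j)
    (m : ℕ) (ξ : Fin m → (Fin d → ℝ)) (w : Fin m → ℝ) (hw : ∀ ν, 0 ≤ w ν)
    (hquad : ∀ f : (Fin d → ℝ) → ℂ, IsTrigPoly (fun j => 3 * N j) f →
      ∑ ν, (w ν : ℂ) * f (ξ ν) =
        (((2 * Real.pi) ^ d : ℝ) : ℂ)⁻¹ * ∫ x in torusCube d, f x) :
    ∀ x : Fin d → ℝ,
      ∑ ν, w ν * ‖∏ j, dlvpKernel (N j) (x j - ξ ν j)‖ ≤ 3 ^ d :=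
  dlvp_weighted_sum_bound_general d N m ξ w hw hquad
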